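/- arXiv:2602.24189 — 4 statements merged into one kernel-verified Lean document; each statement's English description precedes it below -/
import Mathlib

section
/- Let (Ω, F, P) be a probability space and let {H_θ}_{θ>0} be a family of random variables such that (θ, ω) ↦ H_θ(ω) is jointly measurable, |H_θ| ≤ M almost surely for some constant M > 0 independent of θ, and such that there exist constants C, β₁, β₂ > 0 with |E[H_θ H_w]| ≤ C[(θ/w)^{β₁} + (θ/w)^{β₂}] for all 0 < θ < w. Then L_T := (1/log T) ∫₁^T (1/θ) H_θ dθ converges to 0 almost surely as T → ∞. -/
/-!
Write `F_T = ∫₁^T θ⁻¹ H_θ dθ`. Since `∫ w⁻¹ (min θ w / max θ w)^β dw ≤ 2/β` over any interval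
`[a, b] ∋ θ`, Fubini and the correlation bound give `|E[H_θ F_T]| ≤ K := 2C(1/β₁ + 1/β₂)` for
`1 ≤ θ ≤ T`, hence `E[F_T²] ≤ K log T`. Along `T_k = exp(k²)` this gives
`∑ E[(F_{T_k} / k²)²] ≤ ∑ K / k² < ∞`, so `F_{T_k} / log T_k → 0` almost surely. As `F` is
`M`-Lipschitz in `log T` and `(k+1)² - k² = o(k²)`, the gaps between the `T_k` do not matter.
Clamping `H` to `[-M, M]` turns the almost sure bound into a sure one; by Fubini, for almost
every `ω` the clamped path differs from `θ ↦ H_θ(ω)` only on a null set, so `F` is unchanged.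
-/

open MeasureTheory Filter Set Topology

lemma setIntegral_Ioc_inv_mul_div_upper_rpow_le {a b β : ℝ} (ha : 0 < a) (hab : a ≤ b)
    (hβ : 0 < β) :
    ∫ w in Ioc a b, w⁻¹ * (w / b) ^ β ≤ β⁻¹ := by
  have hb : 0 < b := ha.trans_le hab
  have heq : EqOn (fun w : ℝ => w⁻¹ * (w / b) ^ β) (fun w => b ^ (-β) * w ^ (β - 1)) (Ioc a b) := by
    intro w hw
    have hw0 : 0 < w := ha.trans hw.1
    simp only
    rw [Real.rpow_neg hb.le, Real.rpow_sub hw0, Real.rpow_one, Real.div_rpow hw0.le hb.le]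
    field_simp
  rw [setIntegral_congr_fun measurableSet_Ioc heq, ← intervalIntegral.integral_of_le hab,
    intervalIntegral.integral_const_mul, integral_rpow (Or.inl (by linarith)), sub_add_cancel]
  calc b ^ (-β) * ((b ^ β - a ^ β) / β) ≤ b ^ (-β) * (b ^ β / β) := by
        gcongr; exact sub_le_self _ (Real.rpow_nonneg ha.le β)
    _ = β⁻¹ := by rw [Real.rpow_neg hb.le]; field_simp

lemma setIntegral_Ioc_inv_mul_lower_div_rpow_le {a b β : ℝ} (ha : 0 < a) (hab : a ≤ b)
    (hβ : 0 < β) :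
    ∫ w in Ioc a b, w⁻¹ * (a / w) ^ β ≤ β⁻¹ := by
  have hb : 0 < b := ha.trans_le hab
  have heq : EqOn (fun w : ℝ => w⁻¹ * (a / w) ^ β) (fun w => a ^ β * w ^ (-β - 1)) (Ioc a b) := by
    intro w hw
    have hw0 : 0 < w := ha.trans hw.1
    simp only
    rw [Real.rpow_sub hw0, Real.rpow_one, Real.rpow_neg hw0.le, Real.div_rpow ha.le hw0.le]
    field_simp
  rw [setIntegral_congr_fun measurableSet_Ioc heq, ← intervalIntegral.integral_of_le hab,
    intervalIntegral.integral_const_mul,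
    integral_rpow (Or.inr ⟨by linarith, notMem_uIcc_of_lt ha hb⟩), sub_add_cancel]
  calc a ^ β * ((b ^ (-β) - a ^ (-β)) / -β) = a ^ β * ((a ^ (-β) - b ^ (-β)) / β) := by ring
    _ ≤ a ^ β * (a ^ (-β) / β) := by
        gcongr; exact sub_le_self _ (Real.rpow_nonneg hb.le _)
    _ = β⁻¹ := by rw [Real.rpow_neg ha.le]; field_simp

lemma integrableOn_Ioc_inv_mul_min_div_max_rpow {a b θ β : ℝ} (ha : 0 < a) (hβ : 0 ≤ β) :
    IntegrableOn (fun w : ℝ => w⁻¹ * (min θ w / max θ w) ^ β) (Ioc a b) := by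
  refine (ContinuousOn.integrableOn_Icc fun w hw => ?_).mono_set Ioc_subset_Icc_self
  have hw0 : 0 < w := ha.trans_le hw.1
  fun_prop (disch := positivity)

lemma setIntegral_Ioc_inv_mul_min_div_max_rpow_le {a b θ β : ℝ} (ha : 0 < a) (haθ : a ≤ θ)
    (hθb : θ ≤ b) (hβ : 0 < β) :
    ∫ w in Ioc a b, w⁻¹ * (min θ w / max θ w) ^ β ≤ 2 * β⁻¹ := by
  have hint := integrableOn_Ioc_inv_mul_min_div_max_rpow (b := b) (θ := θ) ha hβ.le
  have hsplit := Ioc_union_Ioc_eq_Ioc haθ hθb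
  rw [← hsplit, setIntegral_union (Ioc_disjoint_Ioc_of_le le_rfl) measurableSet_Ioc
    (hint.mono_set (hsplit ▸ subset_union_left)) (hint.mono_set (hsplit ▸ subset_union_right)),
    two_mul]
  gcongr ?_ + ?_
  · calc _ = ∫ w in Ioc a θ, w⁻¹ * (w / θ) ^ β :=
          setIntegral_congr_fun measurableSet_Ioc fun w hw => by
            simp only [min_eq_right hw.2, max_eq_left hw.2]
      _ ≤ β⁻¹ := setIntegral_Ioc_inv_mul_div_upper_rpow_le ha haθ hβ
  · calc _ = ∫ w in Ioc θ b, w⁻¹ * (θ / w) ^ β :=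
          setIntegral_congr_fun measurableSet_Ioc fun w hw => by
            simp only [min_eq_left hw.1.le, max_eq_right hw.1.le]
      _ ≤ β⁻¹ := setIntegral_Ioc_inv_mul_lower_div_rpow_le (ha.trans_le haθ) hθb hβ

lemma integrableOn_Ioc_inv_mul {h : ℝ → ℝ} {M a : ℝ} (hh : Measurable h) (hbd : ∀ θ, |h θ| ≤ M)
    (ha : 0 < a) (b : ℝ) : IntegrableOn (fun θ => θ⁻¹ * h θ) (Ioc a b) := by
  have hinv : IntegrableOn (fun θ : ℝ => θ⁻¹) (Ioc a b) :=
    (ContinuousOn.integrableOn_Icc fun x hx => by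
      have : 0 < x := ha.trans_le hx.1
      fun_prop (disch := positivity)).mono_set Ioc_subset_Icc_self
  exact hinv.mul_bdd hh.aestronglyMeasurable (ae_of_all _ hbd)

lemma abs_setIntegral_Ioc_inv_mul_sub_le {h : ℝ → ℝ} {M a S T : ℝ} (hh : Measurable h)
    (hbd : ∀ θ, |h θ| ≤ M) (ha : 0 < a) (haS : a ≤ S) (hST : S ≤ T) :
    |(∫ θ in Ioc a T, θ⁻¹ * h θ) - ∫ θ in Ioc a S, θ⁻¹ * h θ| ≤ M * (Real.log T - Real.log S) := by
  have hS : 0 < S := ha.trans_le haS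
  have hint : ∀ b, a ≤ b → IntervalIntegrable (fun θ => θ⁻¹ * h θ) volume a b := fun b hb =>
    (intervalIntegrable_iff_integrableOn_Ioc_of_le hb).2 (integrableOn_Ioc_inv_mul hh hbd ha b)
  rw [← intervalIntegral.integral_of_le (haS.trans hST), ← intervalIntegral.integral_of_le haS,
    intervalIntegral.integral_interval_sub_left (hint T (haS.trans hST)) (hint S haS),
    ← Real.norm_eq_abs]
  calc ‖∫ θ in S..T, θ⁻¹ * h θ‖ ≤ ∫ θ in S..T, M * θ⁻¹ := by
        refine intervalIntegral.norm_integral_le_of_norm_le hST (ae_of_all _ fun θ hθ => ?_) ?_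
        · have hθ : 0 < θ := hS.trans hθ.1
          rw [Real.norm_eq_abs, abs_mul, abs_inv, abs_of_pos hθ, mul_comm]
          exact mul_le_mul_of_nonneg_right (hbd θ) (inv_pos.2 hθ).le
        · refine (intervalIntegral.intervalIntegrable_inv (fun x hx => ?_)
            continuousOn_id).const_mul M
          rw [uIcc_of_le hST] at hx
          exact (hS.trans_le hx.1).ne'
    _ = M * (Real.log T - Real.log S) := by
        rw [intervalIntegral.integral_const_mul, integral_inv_of_pos hS (hS.trans_le hST),
          Real.log_div (hS.trans_le hST).ne' hS.ne']

lemma abs_inv_mul_le_of_sq_le_of_lt_succ_sq {g : ℝ → ℝ} {M t : ℝ} {n : ℕ} (hM : 0 ≤ M)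
    (hg : ∀ s t, 0 ≤ s → s ≤ t → |g t - g s| ≤ M * (t - s)) (hn : 1 ≤ n)
    (hnt : (n : ℝ) ^ 2 ≤ t) (htn : t < ((n : ℝ) + 1) ^ 2) :
    |t⁻¹ * g t| ≤ |((n : ℝ) ^ 2)⁻¹ * g ((n : ℝ) ^ 2)| + 3 * M / n := by
  have hn1 : (1 : ℝ) ≤ n := by exact_mod_cast hn
  have hn2 : (0 : ℝ) < (n : ℝ) ^ 2 := by positivity
  have ht0 : 0 < t := hn2.trans_le hnt
  have hgt : |g t| ≤ |g ((n : ℝ) ^ 2)| + M * (2 * n + 1) := by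
    have hlip := hg _ t hn2.le hnt
    have habs := abs_sub_abs_le_abs_sub (g t) (g ((n : ℝ) ^ 2))
    nlinarith
  rw [abs_mul, abs_mul, abs_inv, abs_inv, abs_of_pos ht0, abs_of_pos hn2]
  calc t⁻¹ * |g t| ≤ ((n : ℝ) ^ 2)⁻¹ * (|g ((n : ℝ) ^ 2)| + M * (2 * n + 1)) := by
        gcongr
    _ ≤ _ := by
        rw [mul_add]
        gcongr
        rw [inv_mul_le_iff₀ hn2]
        field_simp
        nlinarith

lemma tendsto_inv_mul_of_tendsto_along_sq {g : ℝ → ℝ} {M : ℝ} (hM : 0 ≤ M)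
    (hg : ∀ s t, 0 ≤ s → s ≤ t → |g t - g s| ≤ M * (t - s))
    (hsq : Tendsto (fun k : ℕ => ((k : ℝ) ^ 2)⁻¹ * g ((k : ℝ) ^ 2)) atTop (𝓝 0)) :
    Tendsto (fun t => t⁻¹ * g t) atTop (𝓝 0) := by
  have hbound : Tendsto (fun k : ℕ => |((k : ℝ) ^ 2)⁻¹ * g ((k : ℝ) ^ 2)| + 3 * M / k)
      atTop (𝓝 0) := by
    simpa using hsq.abs.add (tendsto_const_div_atTop_nhds_zero_nat (3 * M))
  have hfloor : Tendsto (fun t : ℝ => ⌊√t⌋₊) atTop atTop :=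
    tendsto_nat_floor_atTop.comp Real.tendsto_sqrt_atTop
  refine squeeze_zero_norm' ?_ (hbound.comp hfloor)
  filter_upwards [eventually_ge_atTop 1] with t ht
  have hsqrt : 1 ≤ √t := Real.one_le_sqrt.2 ht
  refine abs_inv_mul_le_of_sq_le_of_lt_succ_sq hM hg (Nat.le_floor (by exact_mod_cast hsqrt)) ?_ ?_
  · exact (Real.le_sqrt (Nat.cast_nonneg _) (by linarith)).1 (Nat.floor_le (Real.sqrt_nonneg t))
  · exact (Real.sqrt_lt' (by positivity)).1 (Nat.lt_floor_add_one _)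

lemma ae_tendsto_zero_of_summable_integral_sq {Ω : Type*} [MeasurableSpace Ω] {μ : Measure Ω}
    {X : ℕ → Ω → ℝ} (hX : ∀ k, Measurable (X k)) (hint : ∀ k, Integrable (fun ω => X k ω ^ 2) μ)
    (hsum : Summable fun k => ∫ ω, X k ω ^ 2 ∂μ) :
    ∀ᵐ ω ∂μ, Tendsto (fun k => X k ω) atTop (𝓝 0) := by
  have hmeas : ∀ k, Measurable fun ω => ENNReal.ofReal (X k ω ^ 2) :=
    fun k => ((hX k).pow_const 2).ennreal_ofReal
  have hlint : ∫⁻ ω, ∑' k, ENNReal.ofReal (X k ω ^ 2) ∂μ ≠ ⊤ := by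
    rw [lintegral_tsum fun k => (hmeas k).aemeasurable]
    simp_rw [← ofReal_integral_eq_lintegral_ofReal (hint _) (ae_of_all _ fun ω => sq_nonneg _)]
    rw [← ENNReal.ofReal_tsum_of_nonneg (fun k => integral_nonneg fun ω => sq_nonneg _) hsum]
    exact ENNReal.ofReal_ne_top
  filter_upwards [ae_lt_top (Measurable.tsum hmeas) hlint] with ω hω
  have hsq : Tendsto (fun k => X k ω ^ 2) atTop (𝓝 0) := by
    have := (ENNReal.tendsto_toReal ENNReal.zero_ne_top).comp
      (ENNReal.tendsto_atTop_zero_of_tsum_ne_top hω.ne)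
    simpa [Function.comp_def, ENNReal.toReal_ofReal (sq_nonneg _)] using this
  rw [tendsto_zero_iff_abs_tendsto_zero]
  simpa [Function.comp_def, Real.sqrt_sq_eq_abs] using (Real.continuous_sqrt.tendsto 0).comp hsq

lemma integral_mul_integral_eq_integral_integral {α β : Type*} [MeasurableSpace α]
    [MeasurableSpace β] {μ : Measure α} {ν : Measure β} [IsFiniteMeasure μ] [IsFiniteMeasure ν]
    {f : β → α → ℝ} {g : α → ℝ} {a b : ℝ} (hf : Measurable (Function.uncurry f))
    (hg : Measurable g) (hfb : ∀ᵐ x ∂ν, ∀ y, |f x y| ≤ a) (hgb : ∀ y, |g y| ≤ b) :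
    ∫ y, g y * ∫ x, f x y ∂ν ∂μ = ∫ x, ∫ y, g y * f x y ∂μ ∂ν := by
  simp_rw [← integral_const_mul]
  refine integral_integral_swap (Integrable.of_bound ?_ (b * a) ?_)
  · exact ((hg.comp measurable_fst).mul (hf.comp measurable_swap)).aestronglyMeasurable
  · filter_upwards [Measure.quasiMeasurePreserving_snd.ae hfb] with p hp
    rw [Function.uncurry_apply_pair, Real.norm_eq_abs, abs_mul]
    exact mul_le_mul (hgb _) (hp _) (abs_nonneg _) ((abs_nonneg _).trans (hgb p.1))

lemma abs_integral_mul_le_of_ne {Ω : Type*} [MeasurableSpace Ω] {P : Measure Ω} {H : ℝ → Ω → ℝ}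
    {C β₁ β₂ : ℝ} (hcov : ∀ θ w : ℝ, 0 < θ → θ < w →
      |∫ ω, H θ ω * H w ω ∂P| ≤ C * ((θ / w) ^ β₁ + (θ / w) ^ β₂))
    {θ w : ℝ} (hθ : 0 < θ) (hw : 0 < w) (hne : θ ≠ w) :
    |∫ ω, H θ ω * H w ω ∂P| ≤
      C * ((min θ w / max θ w) ^ β₁ + (min θ w / max θ w) ^ β₂) := by
  rcases hne.lt_or_gt with h | h
  · simpa only [min_eq_left h.le, max_eq_right h.le] using hcov θ w hθ h
  · simp_rw [min_eq_right h.le, max_eq_left h.le, mul_comm (H θ _)]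
    exact hcov w θ hw h

noncomputable def logWeightedIntegral {Ω : Type*} (H : ℝ → Ω → ℝ) (T : ℝ) (ω : Ω) : ℝ :=
  ∫ θ in Ioc 1 T, θ⁻¹ * H θ ω

section LogWeightedIntegral
variable {Ω : Type*} {H : ℝ → Ω → ℝ} {M : ℝ}

lemma ae_restrict_Ioc_abs_inv_mul_le (hbd : ∀ θ ω, |H θ ω| ≤ M) (T : ℝ) :
    ∀ᵐ θ ∂volume.restrict (Ioc 1 T), ∀ ω, |θ⁻¹ * H θ ω| ≤ M := by
  filter_upwards [ae_restrict_mem measurableSet_Ioc] with θ hθ ω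
  rw [abs_mul, abs_inv, abs_of_pos (one_pos.trans hθ.1)]
  exact (mul_le_of_le_one_left (abs_nonneg _) (inv_le_one_of_one_le₀ hθ.1.le)).trans (hbd θ ω)

variable [MeasurableSpace Ω]

lemma measurable_logWeightedIntegral (hH : Measurable (Function.uncurry H)) (T : ℝ) :
    Measurable (logWeightedIntegral H T) := by
  have : StronglyMeasurable fun p : Ω × ℝ => p.2⁻¹ * H p.2 p.1 :=
    (measurable_snd.inv.mul (hH.comp measurable_swap)).stronglyMeasurable
  exact (this.integral_prod_right' (ν := volume.restrict (Ioc 1 T))).measurable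

lemma abs_logWeightedIntegral_sub_le (hH : Measurable (Function.uncurry H))
    (hbd : ∀ θ ω, |H θ ω| ≤ M) (ω : Ω) {S T : ℝ} (hS : 1 ≤ S) (hST : S ≤ T) :
    |logWeightedIntegral H T ω - logWeightedIntegral H S ω| ≤
      M * (Real.log T - Real.log S) :=
  abs_setIntegral_Ioc_inv_mul_sub_le (hH.comp measurable_prodMk_right) (hbd · ω) one_pos hS hST

lemma abs_logWeightedIntegral_le (hH : Measurable (Function.uncurry H))
    (hbd : ∀ θ ω, |H θ ω| ≤ M) (ω : Ω) {T : ℝ} (hT : 1 ≤ T) :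
    |logWeightedIntegral H T ω| ≤ M * Real.log T := by
  simpa [logWeightedIntegral] using abs_logWeightedIntegral_sub_le hH hbd ω le_rfl hT

lemma ae_logWeightedIntegral_eq {P : Measure Ω} [SFinite P] {H' : ℝ → Ω → ℝ}
    (hH : Measurable (Function.uncurry H)) (hH' : Measurable (Function.uncurry H')) (heq : ∀ θ, 0 < θ → H θ =ᵐ[P] H' θ) :
    ∀ᵐ ω ∂P, ∀ T, logWeightedIntegral H T ω = logWeightedIntegral H' T ω := by
  have hsec : ∀ᵐ ω ∂P, ∀ᵐ θ ∂volume.restrict (Ioi 0), H θ ω = H' θ ω :=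
    (Measure.ae_ae_comm (p := fun ω θ => H θ ω = H' θ ω)
      (measurableSet_eq_fun (hH.comp measurable_swap) (hH'.comp measurable_swap))).2
      ((ae_restrict_iff' measurableSet_Ioi).2 (ae_of_all _ heq))
  filter_upwards [hsec] with ω hω
  intro T
  refine setIntegral_congr_ae measurableSet_Ioc ?_
  filter_upwards [(ae_restrict_iff' measurableSet_Ioi).1 hω] with θ hθ hθT
  rw [hθ (one_pos.trans hθT.1)]

variable {P : Measure Ω} [IsFiniteMeasure P] {C β₁ β₂ : ℝ}

lemma abs_integral_mul_logWeightedIntegral_le (hH : Measurable (Function.uncurry H))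
    (hbd : ∀ θ ω, |H θ ω| ≤ M) (hC : 0 ≤ C) (hβ₁ : 0 < β₁) (hβ₂ : 0 < β₂)
    (hcov : ∀ θ w : ℝ, 0 < θ → θ < w →
      |∫ ω, H θ ω * H w ω ∂P| ≤ C * ((θ / w) ^ β₁ + (θ / w) ^ β₂))
    {θ T : ℝ} (hθ : 1 ≤ θ) (hθT : θ ≤ T) :
    |∫ ω, H θ ω * logWeightedIntegral H T ω ∂P| ≤ 2 * C * (β₁⁻¹ + β₂⁻¹) := by
  set r : ℝ → ℝ := fun w => min θ w / max θ w
  have hint : ∀ β : ℝ, 0 < β → IntegrableOn (fun w => w⁻¹ * r w ^ β) (Ioc 1 T) := fun β hβ =>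
    integrableOn_Ioc_inv_mul_min_div_max_rpow one_pos hβ.le
  unfold logWeightedIntegral
  rw [integral_mul_integral_eq_integral_integral (g := H θ) (measurable_fst.inv.mul hH)
    (hH.comp measurable_prodMk_left) (ae_restrict_Ioc_abs_inv_mul_le hbd T) (hbd θ),
    ← Real.norm_eq_abs]
  calc ‖∫ w in Ioc 1 T, ∫ ω, H θ ω * (w⁻¹ * H w ω) ∂P‖
      ≤ ∫ w in Ioc 1 T, C * (w⁻¹ * r w ^ β₁) + C * (w⁻¹ * r w ^ β₂) := by
        refine norm_integral_le_of_norm_le (((hint β₁ hβ₁).const_mul C).add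
          ((hint β₂ hβ₂).const_mul C)) ?_
        filter_upwards [ae_restrict_mem measurableSet_Ioc,
          (volume.restrict (Ioc 1 T)).ae_ne θ] with w hw hwθ
        -- `hcov` says nothing on the diagonal `w = θ`, which is a null set.
        have hw0 : 0 < w := one_pos.trans hw.1
        simp_rw [mul_left_comm (H θ _), integral_const_mul]
        rw [Real.norm_eq_abs, abs_mul, abs_inv, abs_of_pos hw0]
        calc w⁻¹ * |∫ ω, H θ ω * H w ω ∂P| ≤ w⁻¹ * (C * (r w ^ β₁ + r w ^ β₂)) := by
              gcongr
              exact abs_integral_mul_le_of_ne hcov (one_pos.trans_le hθ) hw0 hwθ.symm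
          _ = _ := by ring
    _ = (C * ∫ w in Ioc 1 T, w⁻¹ * r w ^ β₁) + C * ∫ w in Ioc 1 T, w⁻¹ * r w ^ β₂ := by
        rw [integral_add ((hint β₁ hβ₁).const_mul C) ((hint β₂ hβ₂).const_mul C),
          integral_const_mul, integral_const_mul]
    _ ≤ C * (2 * β₁⁻¹) + C * (2 * β₂⁻¹) := by
        gcongr
        · exact setIntegral_Ioc_inv_mul_min_div_max_rpow_le one_pos hθ hθT hβ₁
        · exact setIntegral_Ioc_inv_mul_min_div_max_rpow_le one_pos hθ hθT hβ₂
    _ = 2 * C * (β₁⁻¹ + β₂⁻¹) := by ring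

lemma integral_logWeightedIntegral_sq_le (hH : Measurable (Function.uncurry H))
    (hbd : ∀ θ ω, |H θ ω| ≤ M) (hC : 0 ≤ C) (hβ₁ : 0 < β₁) (hβ₂ : 0 < β₂)
    (hcov : ∀ θ w : ℝ, 0 < θ → θ < w →
      |∫ ω, H θ ω * H w ω ∂P| ≤ C * ((θ / w) ^ β₁ + (θ / w) ^ β₂))
    {T : ℝ} (hT : 1 ≤ T) :
    ∫ ω, logWeightedIntegral H T ω ^ 2 ∂P ≤ 2 * C * (β₁⁻¹ + β₂⁻¹) * Real.log T := by
  set K := 2 * C * (β₁⁻¹ + β₂⁻¹)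
  set F := logWeightedIntegral H T
  have hsq : ∀ ω, F ω ^ 2 = F ω * ∫ θ in Ioc 1 T, θ⁻¹ * H θ ω := fun ω => sq (F ω)
  rw [integral_congr_ae (ae_of_all _ hsq), integral_mul_integral_eq_integral_integral
    (measurable_fst.inv.mul hH) (measurable_logWeightedIntegral hH T)
    (ae_restrict_Ioc_abs_inv_mul_le hbd T) (abs_logWeightedIntegral_le hH hbd · hT)]
  calc ∫ θ in Ioc 1 T, ∫ ω, F ω * (θ⁻¹ * H θ ω) ∂P
      ≤ ‖∫ θ in Ioc 1 T, ∫ ω, F ω * (θ⁻¹ * H θ ω) ∂P‖ := Real.le_norm_self _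
    _ ≤ ∫ θ in Ioc 1 T, θ⁻¹ * K := by
        refine norm_integral_le_of_norm_le
          (integrableOn_Ioc_inv_mul measurable_const (fun _ => le_rfl) one_pos T) ?_
        filter_upwards [ae_restrict_mem measurableSet_Ioc] with θ hθ
        have hθ0 : 0 < θ := one_pos.trans hθ.1
        simp_rw [mul_left_comm (F _), integral_const_mul, mul_comm (F _)]
        rw [Real.norm_eq_abs, abs_mul, abs_inv, abs_of_pos hθ0]
        gcongr
        exact abs_integral_mul_logWeightedIntegral_le hH hbd hC hβ₁ hβ₂ hcov hθ.1.le hθ.2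
    _ = K * Real.log T := by
        rw [← intervalIntegral.integral_of_le hT, intervalIntegral.integral_mul_const,
          integral_inv_of_pos one_pos (one_pos.trans_le hT), div_one, mul_comm]

theorem ae_tendsto_logWeightedIntegral_of_abs_le (hH : Measurable (Function.uncurry H))
    (hbd : ∀ θ ω, |H θ ω| ≤ M) (hC : 0 ≤ C) (hβ₁ : 0 < β₁) (hβ₂ : 0 < β₂)
    (hcov : ∀ θ w : ℝ, 0 < θ → θ < w →
      |∫ ω, H θ ω * H w ω ∂P| ≤ C * ((θ / w) ^ β₁ + (θ / w) ^ β₂)) :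
    ∀ᵐ ω ∂P, Tendsto (fun T => (Real.log T)⁻¹ * logWeightedIntegral H T ω) atTop (𝓝 0) := by
  set F := logWeightedIntegral H
  set X : ℕ → Ω → ℝ := fun k ω => ((k : ℝ) ^ 2)⁻¹ * F (Real.exp ((k : ℝ) ^ 2)) ω
  have hX : ∀ k, Measurable (X k) := fun k => (measurable_logWeightedIntegral hH _).const_mul _
  have hexp : ∀ k : ℕ, 1 ≤ Real.exp ((k : ℝ) ^ 2) := fun k => Real.one_le_exp (by positivity)
  have hXint : ∀ k, Integrable (fun ω => X k ω ^ 2) P := fun k =>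
    (MemLp.of_bound (hX k).aestronglyMeasurable (((k : ℝ) ^ 2)⁻¹ * (M * (k : ℝ) ^ 2))
      (ae_of_all _ fun ω => by
        rw [Real.norm_eq_abs, abs_mul, abs_of_nonneg (by positivity)]
        gcongr
        simpa using abs_logWeightedIntegral_le hH hbd ω (hexp k))).integrable_sq
  have hXsq : ∀ k : ℕ, ∫ ω, X k ω ^ 2 ∂P ≤ 2 * C * (β₁⁻¹ + β₂⁻¹) * ((k : ℝ) ^ 2)⁻¹ := by
    intro k
    simp_rw [X, mul_pow, integral_const_mul]
    calc ((k : ℝ) ^ 2)⁻¹ ^ 2 * ∫ ω, F (Real.exp ((k : ℝ) ^ 2)) ω ^ 2 ∂P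
        ≤ ((k : ℝ) ^ 2)⁻¹ ^ 2 * (2 * C * (β₁⁻¹ + β₂⁻¹) * (k : ℝ) ^ 2) := by
          gcongr
          simpa using integral_logWeightedIntegral_sq_le hH hbd hC hβ₁ hβ₂ hcov (hexp k)
      _ = 2 * C * (β₁⁻¹ + β₂⁻¹) * ((k : ℝ) ^ 2)⁻¹ := by
          rcases eq_or_ne (k : ℝ) 0 with hk | hk
          · simp [hk]
          · field_simp
  have hsum : Summable fun k => ∫ ω, X k ω ^ 2 ∂P :=
    ((Real.summable_nat_pow_inv.2 one_lt_two).mul_left _).of_nonneg_of_le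
      (fun k => integral_nonneg fun ω => sq_nonneg _) hXsq
  filter_upwards [ae_tendsto_zero_of_summable_integral_sq hX hXint hsum] with ω hω
  have hLip : ∀ s t, 0 ≤ s → s ≤ t →
      |F (Real.exp t) ω - F (Real.exp s) ω| ≤ M * (t - s) := fun s t hs hst => by
    simpa using abs_logWeightedIntegral_sub_le hH hbd ω (Real.one_le_exp hs)
      (Real.exp_le_exp.2 hst)
  refine ((tendsto_inv_mul_of_tendsto_along_sq ((abs_nonneg _).trans (hbd 0 ω)) hLip hω).comp
    Real.tendsto_log_atTop).congr' ?_
  filter_upwards [eventually_gt_atTop 0] with T hT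
  simp [Real.exp_log hT]

end LogWeightedIntegral

/-- **Lemma (auxiliary ASCLT lemma).** If `{H_θ}_{θ>0}` is a jointly measurable,
uniformly a.s. bounded family of random variables whose correlations satisfy
`|E[H_θ H_w]| ≤ C ((θ/w)^{β₁} + (θ/w)^{β₂})` for `0 < θ < w`, then
`L_T = (1/log T) ∫₁^T θ⁻¹ H_θ dθ → 0` almost surely as `T → ∞`. -/
theorem stmt_0 {Ω : Type*} [MeasurableSpace Ω] (P : Measure Ω) [IsProbabilityMeasure P]
    (H : ℝ → Ω → ℝ)
    (hmeas : Measurable (Function.uncurry H))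
    (M : ℝ) (hM : 0 < M)
    (hbd : ∀ θ : ℝ, 0 < θ → ∀ᵐ ω ∂P, |H θ ω| ≤ M)
    (C β₁ β₂ : ℝ) (hC : 0 < C) (hβ₁ : 0 < β₁) (hβ₂ : 0 < β₂)
    (hcov : ∀ θ w : ℝ, 0 < θ → θ < w →
      |∫ ω, H θ ω * H w ω ∂P| ≤ C * ((θ / w) ^ β₁ + (θ / w) ^ β₂)) :
    ∀ᵐ ω ∂P, Tendsto (fun T : ℝ => (Real.log T)⁻¹ * ∫ θ in Set.Ioc (1 : ℝ) T, θ⁻¹ * H θ ω)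
      atTop (nhds 0) := by
  set H' : ℝ → Ω → ℝ := fun θ ω => max (-M) (min M (H θ ω))
  have hH' : Measurable (Function.uncurry H') := measurable_const.max (measurable_const.min hmeas)
  have hbd' : ∀ θ ω, |H' θ ω| ≤ M := fun θ ω =>
    abs_le.2 ⟨le_max_left _ _, max_le (by linarith) (min_le_left _ _)⟩
  have heq : ∀ θ, 0 < θ → H θ =ᵐ[P] H' θ := fun θ hθ => by
    filter_upwards [hbd θ hθ] with ω hω
    rw [abs_le] at hω
    simp only [H', min_eq_right hω.2, max_eq_right hω.1]
  have hcov' : ∀ θ w : ℝ, 0 < θ → θ < w →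
      |∫ ω, H' θ ω * H' w ω ∂P| ≤ C * ((θ / w) ^ β₁ + (θ / w) ^ β₂) := fun θ w hθ hθw => by
    have hcorr : ∫ ω, H θ ω * H w ω ∂P = ∫ ω, H' θ ω * H' w ω ∂P := integral_congr_ae <| by
      filter_upwards [heq θ hθ, heq w (hθ.trans hθw)] with ω h₁ h₂
      rw [h₁, h₂]
    exact hcorr ▸ hcov θ w hθ hθw
  filter_upwards [ae_tendsto_logWeightedIntegral_of_abs_le hH' hbd' hC.le hβ₁ hβ₂ hcov',
    ae_logWeightedIntegral_eq hmeas hH' heq] with ω hlim hω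
  exact hlim.congr fun T => by rw [← hω]; rfl
end

section
/- Let (Ω, F, P) be a probability space and let {H_θ}_{θ>0} be a family of random variables such that (θ, ω) ↦ H_θ(ω) is jointly measurable, |H_θ| ≤ M almost surely for some constant M > 0 independent of θ, and such that there exist constants C, β₁, β₂ > 0 with |E[H_θ H_w]| ≤ C[(θ/w)^{β₁} + (θ/w)^{β₂}] for all 0 < θ < w. Then for every T > 1, setting L_T := (1/log T) ∫₁^T (1/θ) H_θ dθ, one has E[L_T²] ≤ (2C/log T)(1/β₁ + 1/β₂). -/
/-!
Expanding the square and using Fubini (legitimate since `H` is bounded and the measures are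
finite), `E[(∫ θ⁻¹ H_θ dθ)²]` is the double integral of `θ⁻¹ w⁻¹ E[H_θ H_w]` over `(1, T]²`.
Off the null diagonal, the correlation bound dominates this integrand by the kernels
`θ⁻¹ w⁻¹ (θ/w)^β` supported on `θ < w`, and their reflections. For fixed `θ` the kernel integrates
over `w > θ` to exactly `θ⁻¹/β`, so each kernel contributes at most `log T / β`.
-/

open MeasureTheory Filter Set

section SecondMoment

variable {α Ω : Type*} [MeasurableSpace α] [MeasurableSpace Ω] {μ : Measure α} {P : Measure Ω}
  [IsFiniteMeasure μ] [IsFiniteMeasure P] {F : α → Ω → ℝ} {M : ℝ}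

theorem integrable_mul_of_ae_abs_le (hF : Measurable (Function.uncurry F))
    (hM : ∀ᵐ a ∂μ, ∀ᵐ ω ∂P, |F a ω| ≤ M) :
    Integrable (fun x : (α × α) × Ω => F x.1.1 x.2 * F x.1.2 x.2) ((μ.prod μ).prod P) := by
  have hF₁ : Measurable fun x : (α × α) × Ω => F x.1.1 x.2 :=
    hF.comp (measurable_fst.fst.prodMk measurable_snd)
  have hF₂ : Measurable fun x : (α × α) × Ω => F x.1.2 x.2 :=
    hF.comp (measurable_fst.snd.prodMk measurable_snd)
  have hbd : ∀ᵐ x ∂(μ.prod μ).prod P, |F x.1.1 x.2| ≤ M ∧ |F x.1.2 x.2| ≤ M := by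
    refine (Measure.ae_prod_iff_ae_ae ((measurableSet_le hF₁.abs measurable_const).inter
      (measurableSet_le hF₂.abs measurable_const))).2 ?_
    filter_upwards [Measure.quasiMeasurePreserving_fst.ae hM,
      Measure.quasiMeasurePreserving_snd.ae hM] with q h₁ h₂
    filter_upwards [h₁, h₂] with ω using And.intro
  refine (integrable_const (M * M)).mono' (hF₁.mul hF₂).aestronglyMeasurable ?_
  filter_upwards [hbd] with x ⟨h₁, h₂⟩
  rw [norm_mul, Real.norm_eq_abs, Real.norm_eq_abs]
  exact mul_le_mul h₁ h₂ (abs_nonneg _) ((abs_nonneg _).trans h₁)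

theorem integral_sq_integral_eq (hF : Measurable (Function.uncurry F))
    (hM : ∀ᵐ a ∂μ, ∀ᵐ ω ∂P, |F a ω| ≤ M) :
    ∫ ω, (∫ a, F a ω ∂μ) ^ 2 ∂P = ∫ q, ∫ ω, F q.1 ω * F q.2 ω ∂P ∂(μ.prod μ) := by
  have hsq : ∀ ω, (∫ a, F a ω ∂μ) ^ 2 = ∫ q, F q.1 ω * F q.2 ω ∂(μ.prod μ) := fun ω => by
    rw [sq]
    exact (integral_prod_mul (fun a => F a ω) (fun a => F a ω)).symm
  simp_rw [hsq]
  exact (integral_integral_swap (integrable_mul_of_ae_abs_le hF hM)).symm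

end SecondMoment

theorem ae_mem_prod_restrict {α β : Type*} [MeasurableSpace α] [MeasurableSpace β]
    {μ : Measure α} {ν : Measure β} [SFinite μ] [SFinite ν] {s : Set α} {t : Set β}
    (hs : MeasurableSet s) (ht : MeasurableSet t) :
    ∀ᵐ q ∂(μ.restrict s).prod (ν.restrict t), q ∈ s ×ˢ t := by
  rw [Measure.prod_restrict s t]
  exact ae_restrict_mem (hs.prod ht)

theorem ae_fst_ne_snd {α : Type*} [MeasurableSpace α] [MeasurableEq α]
    {μ ν : Measure α} [SFinite ν] [NullSingletonClass ν] :
    ∀ᵐ q ∂μ.prod ν, q.1 ≠ q.2 := by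
  rw [ae_iff]
  simp only [ne_eq, not_not]
  change μ.prod ν (diagonal α) = 0
  refine (Measure.measure_prod_null measurableSet_diagonal).2 (ae_of_all _ fun x => ?_)
  have : Prod.mk x ⁻¹' diagonal α = {x} := by ext; simp [eq_comm]
  simp [this]

noncomputable def ratioKernel (β : ℝ) (q : ℝ × ℝ) : ℝ :=
  if q.1 < q.2 then q.1⁻¹ * q.2⁻¹ * (q.1 / q.2) ^ β else 0

section RatioKernel

variable {β : ℝ}

theorem ratioKernel_of_le {q : ℝ × ℝ} (h : q.2 ≤ q.1) : ratioKernel β q = 0 :=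
  if_neg h.not_gt

theorem ratioKernel_nonneg {q : ℝ × ℝ} (h : 0 < q.1) : 0 ≤ ratioKernel β q := by
  unfold ratioKernel
  split_ifs with hlt
  · have := h.trans hlt
    positivity
  · rfl

theorem measurable_ratioKernel (β : ℝ) : Measurable (ratioKernel β) :=
  Measurable.ite (measurableSet_lt measurable_fst measurable_snd) (by fun_prop) measurable_const

theorem inv_mul_inv_mul_div_rpow {a b : ℝ} (ha : 0 < a) (hb : 0 < b) (β : ℝ) :
    a⁻¹ * b⁻¹ * (a / b) ^ β = a ^ (β - 1) * b ^ (-β - 1) := by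
  rw [Real.div_rpow ha.le hb.le, Real.rpow_sub ha, Real.rpow_one, Real.rpow_sub hb,
    Real.rpow_one, Real.rpow_neg hb.le]
  field_simp

theorem ratioKernel_slice_eq_indicator {θ : ℝ} (hθ : 0 < θ) :
    (fun w => ratioKernel β (θ, w)) = (Ioi θ).indicator fun w => θ ^ (β - 1) * w ^ (-β - 1) := by
  ext w
  by_cases hw : θ < w
  · simp [ratioKernel, hw, inv_mul_inv_mul_div_rpow hθ (hθ.trans hw)]
  · simp [ratioKernel, hw]

theorem integrable_ratioKernel_slice (hβ : 0 < β) {θ : ℝ} (hθ : 0 < θ) :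
    Integrable fun w => ratioKernel β (θ, w) := by
  rw [ratioKernel_slice_eq_indicator hθ, integrable_indicator_iff measurableSet_Ioi]
  exact (integrableOn_Ioi_rpow_of_lt (by linarith) hθ).const_mul _

theorem integral_ratioKernel_slice (hβ : 0 < β) {θ : ℝ} (hθ : 0 < θ) :
    ∫ w, ratioKernel β (θ, w) = θ⁻¹ / β := by
  rw [ratioKernel_slice_eq_indicator hθ, integral_indicator measurableSet_Ioi, integral_const_mul,
    integral_Ioi_rpow_of_lt (by linarith) hθ, show -β - 1 + 1 = -β by ring, Real.rpow_neg hθ.le,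
    Real.rpow_sub hθ, Real.rpow_one]
  have := Real.rpow_pos_of_pos hθ β
  field_simp

variable {a b : ℝ}

theorem integrable_ratioKernel (hβ : 0 ≤ β) (ha : 0 < a) :
    Integrable (ratioKernel β) ((volume.restrict (Ioc a b)).prod (volume.restrict (Ioc a b))) := by
  refine (integrable_const (a⁻¹ * a⁻¹)).mono' (measurable_ratioKernel β).aestronglyMeasurable ?_
  filter_upwards [ae_mem_prod_restrict measurableSet_Ioc measurableSet_Ioc] with q ⟨h₁, h₂⟩
  have hq₁ : 0 < q.1 := ha.trans h₁.1
  have hq₂ : 0 < q.2 := ha.trans h₂.1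
  unfold ratioKernel
  split_ifs with hlt
  · rw [Real.norm_eq_abs, abs_of_nonneg (by positivity)]
    have hratio : (q.1 / q.2) ^ β ≤ 1 :=
      Real.rpow_le_one (by positivity) ((div_le_one hq₂).2 hlt.le) hβ
    calc q.1⁻¹ * q.2⁻¹ * (q.1 / q.2) ^ β ≤ a⁻¹ * a⁻¹ * 1 := by
          gcongr
          exacts [h₁.1.le, h₂.1.le]
      _ = a⁻¹ * a⁻¹ := mul_one _
  · simp only [norm_zero]
    positivity

theorem integral_ratioKernel_le (hβ : 0 < β) (ha : 0 < a) (hab : a ≤ b) :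
    ∫ q, ratioKernel β q ∂(volume.restrict (Ioc a b)).prod (volume.restrict (Ioc a b))
      ≤ Real.log (b / a) / β := by
  have hinv : IntegrableOn (fun θ : ℝ => θ⁻¹ / β) (Ioc a b) := by
    refine Integrable.div_const ?_ β
    exact (intervalIntegrable_iff_integrableOn_Ioc_of_le hab).1
      (intervalIntegral.intervalIntegrable_inv (fun x hx => (ha.trans_le (by
        simpa [hab] using hx.1)).ne') continuousOn_id)
  rw [integral_prod _ (integrable_ratioKernel hβ.le ha)]
  calc ∫ θ in Ioc a b, ∫ w in Ioc a b, ratioKernel β (θ, w)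
      ≤ ∫ θ in Ioc a b, θ⁻¹ / β := by
        refine integral_mono_ae (integrable_ratioKernel hβ.le ha).integral_prod_left hinv ?_
        filter_upwards [ae_restrict_mem measurableSet_Ioc] with θ hθ
        have hθ₀ : 0 < θ := ha.trans hθ.1
        rw [← integral_ratioKernel_slice hβ hθ₀]
        exact setIntegral_le_integral (integrable_ratioKernel_slice hβ hθ₀)
          (ae_of_all _ fun w => ratioKernel_nonneg hθ₀)
    _ = Real.log (b / a) / β := by
        rw [integral_div, ← intervalIntegral.integral_of_le hab,
          integral_inv_of_pos ha (ha.trans_le hab)]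

end RatioKernel

section Correlation

variable {c : ℝ → ℝ → ℝ} {C β₁ β₂ : ℝ}

theorem inv_mul_inv_mul_le_ratioKernel
    (hc : ∀ θ w, 0 < θ → θ < w → |c θ w| ≤ C * ((θ / w) ^ β₁ + (θ / w) ^ β₂))
    {θ w : ℝ} (hθ : 0 < θ) (hθw : θ < w) :
    θ⁻¹ * w⁻¹ * c θ w ≤ C * (ratioKernel β₁ (θ, w) + ratioKernel β₂ (θ, w)) := by
  have hw : 0 < w := hθ.trans hθw
  simp only [ratioKernel, if_pos hθw]
  calc θ⁻¹ * w⁻¹ * c θ w ≤ θ⁻¹ * w⁻¹ * (C * ((θ / w) ^ β₁ + (θ / w) ^ β₂)) := by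
        gcongr
        exact (le_abs_self _).trans (hc θ w hθ hθw)
    _ = _ := by ring

theorem inv_mul_inv_mul_le_ratioKernel_add_swap (hsymm : ∀ θ w, c θ w = c w θ)
    (hc : ∀ θ w, 0 < θ → θ < w → |c θ w| ≤ C * ((θ / w) ^ β₁ + (θ / w) ^ β₂))
    {q : ℝ × ℝ} (h₁ : 0 < q.1) (h₂ : 0 < q.2) (hne : q.1 ≠ q.2) :
    q.1⁻¹ * q.2⁻¹ * c q.1 q.2 ≤ C * (ratioKernel β₁ q + ratioKernel β₂ q)
      + C * (ratioKernel β₁ q.swap + ratioKernel β₂ q.swap) := by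
  rcases hne.lt_or_gt with hlt | hgt
  · rw [ratioKernel_of_le (q := q.swap) hlt.le, ratioKernel_of_le (q := q.swap) hlt.le,
      add_zero, mul_zero, add_zero]
    exact inv_mul_inv_mul_le_ratioKernel hc h₁ hlt
  · rw [ratioKernel_of_le hgt.le, ratioKernel_of_le hgt.le, add_zero, mul_zero, zero_add,
      mul_comm q.1⁻¹, hsymm]
    exact inv_mul_inv_mul_le_ratioKernel hc h₂ hgt

theorem integral_inv_mul_inv_mul_le {a b : ℝ} (ha : 0 < a) (hab : a ≤ b) (hC : 0 ≤ C)
    (hβ₁ : 0 < β₁) (hβ₂ : 0 < β₂) (hsymm : ∀ θ w, c θ w = c w θ)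
    (hc : ∀ θ w, 0 < θ → θ < w → |c θ w| ≤ C * ((θ / w) ^ β₁ + (θ / w) ^ β₂))
    (hint : Integrable (fun q : ℝ × ℝ => q.1⁻¹ * q.2⁻¹ * c q.1 q.2)
      ((volume.restrict (Ioc a b)).prod (volume.restrict (Ioc a b)))) :
    ∫ q, q.1⁻¹ * q.2⁻¹ * c q.1 q.2 ∂(volume.restrict (Ioc a b)).prod (volume.restrict (Ioc a b))
      ≤ 2 * C * (1 / β₁ + 1 / β₂) * Real.log (b / a) := by
  set μ := volume.restrict (Ioc a b)
  set S : ℝ × ℝ → ℝ := fun q => ratioKernel β₁ q + ratioKernel β₂ q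
  have hK₁ := integrable_ratioKernel (b := b) hβ₁.le ha
  have hK₂ := integrable_ratioKernel (b := b) hβ₂.le ha
  have hS : Integrable S (μ.prod μ) := hK₁.add hK₂
  have hS_swap : Integrable (fun q => S q.swap) (μ.prod μ) := hS.swap
  calc ∫ q, q.1⁻¹ * q.2⁻¹ * c q.1 q.2 ∂μ.prod μ
      ≤ ∫ q, (C * S q + C * S q.swap) ∂μ.prod μ := by
        refine integral_mono_ae hint ((hS.const_mul C).add (hS_swap.const_mul C)) ?_
        filter_upwards [ae_mem_prod_restrict measurableSet_Ioc measurableSet_Ioc,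
          ae_fst_ne_snd] with q ⟨h₁, h₂⟩ hne
        exact inv_mul_inv_mul_le_ratioKernel_add_swap hsymm hc (ha.trans h₁.1) (ha.trans h₂.1) hne
    _ = 2 * C * (∫ q, ratioKernel β₁ q ∂μ.prod μ + ∫ q, ratioKernel β₂ q ∂μ.prod μ) := by
        rw [integral_add (hS.const_mul C) (hS_swap.const_mul C), integral_const_mul,
          integral_const_mul, integral_prod_swap, integral_add hK₁ hK₂]
        ring
    _ ≤ 2 * C * (Real.log (b / a) / β₁ + Real.log (b / a) / β₂) := by
        gcongr
        exacts [integral_ratioKernel_le hβ₁ ha hab, integral_ratioKernel_le hβ₂ ha hab]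
    _ = 2 * C * (1 / β₁ + 1 / β₂) * Real.log (b / a) := by ring

end Correlation

theorem stmt_1_general {Ω : Type*} [MeasurableSpace Ω] (P : Measure Ω) [IsProbabilityMeasure P]
    (H : ℝ → Ω → ℝ)
    (hmeas : Measurable (Function.uncurry H))
    (M : ℝ)
    (hbd : ∀ θ : ℝ, 0 < θ → ∀ᵐ ω ∂P, |H θ ω| ≤ M)
    (C β₁ β₂ : ℝ) (hC : 0 < C) (hβ₁ : 0 < β₁) (hβ₂ : 0 < β₂)
    (hcov : ∀ θ w : ℝ, 0 < θ → θ < w →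
      |∫ ω, H θ ω * H w ω ∂P| ≤ C * ((θ / w) ^ β₁ + (θ / w) ^ β₂)) :
    ∀ T : ℝ, 1 < T →
      ∫ ω, ((Real.log T)⁻¹ * ∫ θ in Set.Ioc (1 : ℝ) T, θ⁻¹ * H θ ω) ^ 2 ∂P
        ≤ 2 * C / Real.log T * (1 / β₁ + 1 / β₂) := by
  intro T hT
  have hF : Measurable (Function.uncurry fun θ ω => θ⁻¹ * H θ ω) := measurable_fst.inv.mul hmeas
  have hFbd : ∀ᵐ θ ∂volume.restrict (Ioc 1 T), ∀ᵐ ω ∂P, |θ⁻¹ * H θ ω| ≤ M := by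
    filter_upwards [ae_restrict_mem measurableSet_Ioc] with θ hθ
    filter_upwards [hbd θ (one_pos.trans hθ.1)] with ω hω
    rw [abs_mul, abs_inv, abs_of_pos (one_pos.trans hθ.1)]
    exact (mul_le_of_le_one_left (abs_nonneg _) (inv_le_one_of_one_le₀ hθ.1.le)).trans hω
  have hcorr : ∀ q : ℝ × ℝ, ∫ ω, q.1⁻¹ * H q.1 ω * (q.2⁻¹ * H q.2 ω) ∂P
      = q.1⁻¹ * q.2⁻¹ * ∫ ω, H q.1 ω * H q.2 ω ∂P := fun q => by
    rw [← integral_const_mul]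
    congr 1 with ω
    ring
  have hmoment := integral_sq_integral_eq hF hFbd
  have hint := (integrable_mul_of_ae_abs_le hF hFbd).integral_prod_left
  simp only [hcorr] at hmoment hint
  have hbound := integral_inv_mul_inv_mul_le one_pos hT.le hC.le hβ₁ hβ₂
    (fun θ w => by simp_rw [mul_comm (H θ _)]) hcov hint
  rw [div_one] at hbound
  have hlog := Real.log_pos hT
  simp_rw [mul_pow]
  rw [integral_const_mul, hmoment]
  calc (Real.log T)⁻¹ ^ 2 * _ ≤ (Real.log T)⁻¹ ^ 2 * (2 * C * (1 / β₁ + 1 / β₂) * Real.log T) := by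
        gcongr
    _ = 2 * C / Real.log T * (1 / β₁ + 1 / β₂) := by
        field_simp

/-- **Second-moment bound for `L_T`.** Under the correlation bound
`|E[H_θ H_w]| ≤ C ((θ/w)^{β₁} + (θ/w)^{β₂})` for `0 < θ < w`, the random variable
`L_T = (1/log T) ∫₁^T θ⁻¹ H_θ dθ` satisfies `E[L_T²] ≤ (2C/log T)(1/β₁ + 1/β₂)`. -/
theorem stmt_1 {Ω : Type*} [MeasurableSpace Ω] (P : Measure Ω) [IsProbabilityMeasure P]
    (H : ℝ → Ω → ℝ)
    (hmeas : Measurable (Function.uncurry H))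
    (M : ℝ) (hM : 0 < M)
    (hbd : ∀ θ : ℝ, 0 < θ → ∀ᵐ ω ∂P, |H θ ω| ≤ M)
    (C β₁ β₂ : ℝ) (hC : 0 < C) (hβ₁ : 0 < β₁) (hβ₂ : 0 < β₂)
    (hcov : ∀ θ w : ℝ, 0 < θ → θ < w →
      |∫ ω, H θ ω * H w ω ∂P| ≤ C * ((θ / w) ^ β₁ + (θ / w) ^ β₂)) :
    ∀ T : ℝ, 1 < T →
      ∫ ω, ((Real.log T)⁻¹ * ∫ θ in Set.Ioc (1 : ℝ) T, θ⁻¹ * H θ ω) ^ 2 ∂P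
        ≤ 2 * C / Real.log T * (1 / β₁ + 1 / β₂) :=
  stmt_1_general P H hmeas M hbd C β₁ β₂ hC hβ₁ hβ₂ hcov
end

section
/- Let α ∈ (0,1). Then for every x ∈ ℝ with x ≠ 0, ∫_ℝ R_{1,α/2}(y) R_{1,α/2}(x − y) dy = R_{1,α}(x); equivalently, C_{1,α/2}² ∫_ℝ |y|^{α/2 − 1} |x − y|^{α/2 − 1} dy = C_{1,α} |x|^{α − 1}. -/
open MeasureTheory Real

/-- The constant `C_{1,α} = π^{-1/2} 2^{-α} Γ((1-α)/2)/Γ(α/2)` of the Riesz kernel. -/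
noncomputable def rieszConst (α : ℝ) : ℝ :=
  π ^ (-(1 / 2) : ℝ) * (2 : ℝ) ^ (-α) * (Gamma ((1 - α) / 2) / Gamma (α / 2))

/-- The Riesz kernel of order `α`: `R_{1,α}(x) = C_{1,α}|x|^{-(1-α)}`. -/
noncomputable def rieszKernel (α : ℝ) (x : ℝ) : ℝ := rieszConst α * |x| ^ (α - 1)

open Set

/-!
Substituting `y = x u` reduces the convolution to `|x| ^ (s + t - 1)` times
`∫ |u| ^ (s - 1) * |1 - u| ^ (t - 1) du`. Split at `0` and `1`: the piece over `(0, 1)` is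
`B(s, t)`, the piece over `(1, ∞)` becomes `B(1 - s - t, t)` under `u ↦ 1 / u`, and the piece
over `(-∞, 0)` becomes `B(1 - s - t, s)` under `u ↦ 1 - u`.

Legendre duplication and Euler reflection give `C_{1,a} = 1 / (2 Γ(a) cos (π a / 2))`, and
reflection turns the three Beta values into `Γ(s) Γ(t) Γ(1 - s - t) / π` times
`sin (π (s + t)) + sin (π s) + sin (π t) = 4 sin (π (s + t) / 2) cos (π s / 2) cos (π t / 2)`.
The cosines cancel against `C_{1,s} C_{1,t}` and what is left is `C_{1,s+t}`.
-/

theorem ofReal_rpow_mul_one_sub_rpow {x : ℝ} (hx : x ∈ Icc (0 : ℝ) 1) (s t : ℝ) :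
    ((x ^ (s - 1) * (1 - x) ^ (t - 1) : ℝ) : ℂ)
      = (x : ℂ) ^ (s - 1 : ℂ) * (1 - x : ℂ) ^ (t - 1 : ℂ) := by
  rw [Complex.ofReal_mul, Complex.ofReal_cpow hx.1, Complex.ofReal_cpow (sub_nonneg.2 hx.2)]
  push_cast
  rfl

theorem integrableOn_rpow_mul_one_sub_rpow {s t : ℝ} (hs : 0 < s) (ht : 0 < t) :
    IntegrableOn (fun x : ℝ ↦ x ^ (s - 1) * (1 - x) ^ (t - 1)) (Ioo 0 1) := by
  have h : IntegrableOn
      (fun x : ℝ ↦ ((x : ℂ) ^ (s - 1 : ℂ) * (1 - x : ℂ) ^ (t - 1 : ℂ)).re) (Ioc 0 1) :=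
    (Complex.betaIntegral_convergent (u := s) (v := t) (by simpa) (by simpa)).1.re
  refine (h.congr_fun (fun x hx ↦ ?_) measurableSet_Ioc).mono_set Ioo_subset_Ioc_self
  rw [← ofReal_rpow_mul_one_sub_rpow (Ioc_subset_Icc_self hx), Complex.ofReal_re]

theorem integral_rpow_mul_one_sub_rpow {s t : ℝ} (hs : 0 < s) (ht : 0 < t) :
    ∫ x in Ioo 0 1, x ^ (s - 1) * (1 - x) ^ (t - 1) = Gamma s * Gamma t / Gamma (s + t) := by
  have h := Complex.Gamma_mul_Gamma_eq_betaIntegral (s := s) (t := t) (by simpa) (by simpa)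
  rw [Complex.betaIntegral, intervalIntegral.integral_of_le zero_le_one,
    ← setIntegral_congr_fun measurableSet_Ioc
      (fun x hx ↦ ofReal_rpow_mul_one_sub_rpow (Ioc_subset_Icc_self hx) s t),
    integral_complex_ofReal, integral_Ioc_eq_integral_Ioo, ← Complex.ofReal_add,
    Complex.Gamma_ofReal, Complex.Gamma_ofReal, Complex.Gamma_ofReal] at h
  rw [eq_div_iff (Gamma_pos_of_pos (add_pos hs ht)).ne', mul_comm]
  exact_mod_cast h.symm

noncomputable def absBetaIntegrand (s t y : ℝ) : ℝ := |y| ^ (s - 1) * |1 - y| ^ (t - 1)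

theorem absBetaIntegrand_one_sub (s t y : ℝ) :
    absBetaIntegrand s t (1 - y) = absBetaIntegrand t s y := by
  rw [absBetaIntegrand, absBetaIntegrand, sub_sub_cancel, mul_comm]

theorem absBetaIntegrand_eqOn_Ioo (s t : ℝ) :
    EqOn (absBetaIntegrand s t) (fun y ↦ y ^ (s - 1) * (1 - y) ^ (t - 1)) (Ioo 0 1) :=
  fun y hy ↦ by rw [absBetaIntegrand, abs_of_pos hy.1, abs_of_pos (sub_pos.2 hy.2)]

theorem integrableOn_absBetaIntegrand_Ioo {s t : ℝ} (hs : 0 < s) (ht : 0 < t) :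
    IntegrableOn (absBetaIntegrand s t) (Ioo 0 1) :=
  (integrableOn_rpow_mul_one_sub_rpow hs ht).congr_fun
    (absBetaIntegrand_eqOn_Ioo s t).symm measurableSet_Ioo

theorem integral_absBetaIntegrand_Ioo {s t : ℝ} (hs : 0 < s) (ht : 0 < t) :
    ∫ y in Ioo 0 1, absBetaIntegrand s t y = Gamma s * Gamma t / Gamma (s + t) := by
  rw [setIntegral_congr_fun measurableSet_Ioo (absBetaIntegrand_eqOn_Ioo s t),
    integral_rpow_mul_one_sub_rpow hs ht]

open scoped Pointwise in
theorem image_inv_Ioo_zero_one : Inv.inv '' Ioo (0 : ℝ) 1 = Ioi 1 := by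
  rw [image_inv_eq_inv, inv_Ioo_0_left one_pos, inv_one]

theorem abs_deriv_inv_smul_absBetaIntegrand_inv (s t : ℝ) {u : ℝ} (hu : u ∈ Ioo (0 : ℝ) 1) :
    |-(u ^ 2)⁻¹| • absBetaIntegrand s t u⁻¹ = u ^ (1 - s - t - 1) * (1 - u) ^ (t - 1) := by
  obtain ⟨hu₀, hu₁⟩ := hu
  have h1 : |1 - u⁻¹| = u⁻¹ * (1 - u) := by
    rw [abs_of_neg (sub_neg.2 ((one_lt_inv₀ hu₀).2 hu₁)), mul_one_sub, inv_mul_cancel₀ hu₀.ne',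
      neg_sub]
  rw [absBetaIntegrand, smul_eq_mul, abs_neg, abs_inv, abs_of_pos (pow_pos hu₀ 2), h1,
    abs_of_pos (inv_pos.2 hu₀), mul_rpow (inv_pos.2 hu₀).le (sub_pos.2 hu₁).le,
    inv_rpow hu₀.le, inv_rpow hu₀.le, ← rpow_natCast, ← rpow_neg hu₀.le, ← rpow_neg hu₀.le,
    ← rpow_neg hu₀.le, ← mul_assoc, ← mul_assoc, ← rpow_add hu₀, ← rpow_add hu₀]
  ring_nf

theorem integrableOn_absBetaIntegrand_Ioi {s t : ℝ} (ht : 0 < t) (hst : s + t < 1) :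
    IntegrableOn (absBetaIntegrand s t) (Ioi 1) := by
  rw [← image_inv_Ioo_zero_one, integrableOn_image_iff_integrableOn_abs_deriv_smul
    measurableSet_Ioo (fun u hu ↦ (hasDerivAt_inv hu.1.ne').hasDerivWithinAt) inv_injective.injOn]
  exact (integrableOn_rpow_mul_one_sub_rpow (by linarith) ht).congr_fun
    (fun u hu ↦ (abs_deriv_inv_smul_absBetaIntegrand_inv s t hu).symm) measurableSet_Ioo

theorem integral_absBetaIntegrand_Ioi {s t : ℝ} (ht : 0 < t) (hst : s + t < 1) :
    ∫ y in Ioi 1, absBetaIntegrand s t y = Gamma (1 - s - t) * Gamma t / Gamma (1 - s) := by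
  rw [← image_inv_Ioo_zero_one, integral_image_eq_integral_abs_deriv_smul
    measurableSet_Ioo (fun u hu ↦ (hasDerivAt_inv hu.1.ne').hasDerivWithinAt) inv_injective.injOn,
    setIntegral_congr_fun measurableSet_Ioo
      (fun u hu ↦ abs_deriv_inv_smul_absBetaIntegrand_inv s t hu),
    integral_rpow_mul_one_sub_rpow (by linarith) ht, sub_add_cancel]

theorem integrableOn_absBetaIntegrand_Iio {s t : ℝ} (hs : 0 < s) (hst : s + t < 1) :
    IntegrableOn (absBetaIntegrand s t) (Iio 0) := by
  have h := (Measure.measurePreserving_sub_left volume (1 : ℝ)).integrableOn_comp_preimage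
    (MeasurableEquiv.subLeft (1 : ℝ)).measurableEmbedding (f := absBetaIntegrand t s) (s := Ioi 1)
  simpa [Function.comp_def, absBetaIntegrand_one_sub] using
    h.2 (integrableOn_absBetaIntegrand_Ioi hs (by linarith))

theorem integral_absBetaIntegrand_Iio {s t : ℝ} (hs : 0 < s) (hst : s + t < 1) :
    ∫ y in Iio 0, absBetaIntegrand s t y = Gamma (1 - s - t) * Gamma s / Gamma (1 - t) := by
  have h := (Measure.measurePreserving_sub_left volume (1 : ℝ)).setIntegral_preimage_emb
    (MeasurableEquiv.subLeft (1 : ℝ)).measurableEmbedding (absBetaIntegrand t s) (Ioi 1)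
  simp only [absBetaIntegrand_one_sub] at h
  rwa [preimage_const_sub_Ioi, sub_self, integral_absBetaIntegrand_Ioi hs (by linarith),
    sub_right_comm] at h

theorem integral_absBetaIntegrand {s t : ℝ} (hs : 0 < s) (ht : 0 < t) (hst : s + t < 1) :
    ∫ y, absBetaIntegrand s t y = Gamma s * Gamma t / Gamma (s + t)
      + Gamma (1 - s - t) * Gamma t / Gamma (1 - s)
      + Gamma (1 - s - t) * Gamma s / Gamma (1 - t) := by
  have hIic : IntegrableOn (absBetaIntegrand s t) (Iic 0) :=
    (integrableOn_absBetaIntegrand_Iio hs hst).congr_set_ae Iio_ae_eq_Iic.symm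
  have hIoc : IntegrableOn (absBetaIntegrand s t) (Ioc 0 1) :=
    (integrableOn_absBetaIntegrand_Ioo hs ht).congr_set_ae Ioo_ae_eq_Ioc.symm
  have hIoi := integrableOn_absBetaIntegrand_Ioi ht hst
  have hsplit : Ioc (0 : ℝ) 1 ∪ Ioi 1 = Ioi 0 := Ioc_union_Ioi_eq_Ioi zero_le_one
  rw [← intervalIntegral.integral_Iic_add_Ioi hIic (hsplit ▸ hIoc.union hIoi), ← hsplit,
    setIntegral_union (Ioc_disjoint_Ioi le_rfl) measurableSet_Ioi hIoc hIoi,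
    setIntegral_congr_set Iio_ae_eq_Iic.symm, integral_Ioc_eq_integral_Ioo,
    integral_absBetaIntegrand_Iio hs hst, integral_absBetaIntegrand_Ioo hs ht,
    integral_absBetaIntegrand_Ioi ht hst]
  ring

theorem integral_abs_rpow_mul_abs_sub_rpow (s t : ℝ) {x : ℝ} (hx : x ≠ 0) :
    ∫ y, |y| ^ (s - 1) * |x - y| ^ (t - 1)
      = |x| ^ (s + t - 1) * ∫ y, absBetaIntegrand s t y := by
  have hx' : 0 < |x| := abs_pos.2 hx
  have homogeneity (y : ℝ) : |x * y| ^ (s - 1) * |x - x * y| ^ (t - 1)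
      = |x| ^ (s + t - 2) * absBetaIntegrand s t y := by
    rw [absBetaIntegrand, ← mul_one_sub, abs_mul, abs_mul, mul_rpow (abs_nonneg x) (abs_nonneg y),
      mul_rpow (abs_nonneg x) (abs_nonneg _), show s + t - 2 = (s - 1) + (t - 1) by ring,
      rpow_add hx']
    ring
  have h := Measure.integral_comp_mul_left (fun y ↦ |y| ^ (s - 1) * |x - y| ^ (t - 1)) x
  simp only [homogeneity, integral_const_mul, smul_eq_mul, abs_inv] at h
  rw [eq_inv_mul_iff_mul_eq₀ hx'.ne'] at h
  rw [← h, show s + t - 1 = 1 + (s + t - 2) by ring, rpow_add hx', rpow_one, mul_assoc]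

theorem sin_add_add_sin_add_sin (a b : ℝ) :
    sin (a + b) + sin a + sin b = 4 * sin ((a + b) / 2) * cos (a / 2) * cos (b / 2) := by
  have hsum : sin (a + b) = 2 * sin ((a + b) / 2) * cos ((a + b) / 2) := by
    rw [← sin_two_mul]; ring_nf
  have hcos : cos ((a + b) / 2) + cos ((a - b) / 2) = 2 * cos (a / 2) * cos (b / 2) := by
    rw [cos_add_cos]; ring_nf
  rw [add_assoc, sin_add_sin, hsum]
  linear_combination 2 * sin ((a + b) / 2) * hcos

theorem inv_Gamma_eq_Gamma_one_sub_mul_sin {s : ℝ} (hs : sin (π * s) ≠ 0) :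
    (Gamma s)⁻¹ = Gamma (1 - s) * sin (π * s) / π := by
  have reflection : Gamma s * Gamma (1 - s) * sin (π * s) = π := by
    rw [Gamma_mul_Gamma_one_sub, div_mul_cancel₀ _ hs]
  have hΓ : Gamma s ≠ 0 := fun h ↦ by simp [h, pi_ne_zero, eq_comm] at reflection
  rw [eq_div_iff pi_ne_zero]
  nth_rw 1 [← reflection]
  field_simp

theorem inv_Gamma_one_sub_eq_Gamma_mul_sin {s : ℝ} (hs : sin (π * s) ≠ 0) :
    (Gamma (1 - s))⁻¹ = Gamma s * sin (π * s) / π := by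
  have hsin : sin (π * (1 - s)) = sin (π * s) := by rw [mul_one_sub, sin_pi_sub]
  rw [inv_Gamma_eq_Gamma_one_sub_mul_sin (hsin ▸ hs), sub_sub_cancel, hsin]

theorem cos_pi_mul_div_two_pos {a : ℝ} (ha₀ : -1 < a) (ha₁ : a < 1) : 0 < cos (π * a / 2) :=
  cos_pos_of_mem_Ioo ⟨by nlinarith [pi_pos], by nlinarith [pi_pos]⟩

theorem rieszConst_eq_inv {a : ℝ} (ha₀ : 0 < a) (ha₁ : a < 1) :
    rieszConst a = (2 * Gamma a * cos (π * a / 2))⁻¹ := by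
  have hcos := cos_pi_mul_div_two_pos (by linarith) ha₁
  have reflection : Gamma ((1 + a) / 2) * Gamma ((1 - a) / 2) * cos (π * a / 2) = π := by
    have hsin : sin (π * ((1 + a) / 2)) = cos (π * a / 2) := by
      rw [← sin_add_pi_div_two]; ring_nf
    rw [show (1 - a) / 2 = 1 - (1 + a) / 2 by ring, Gamma_mul_Gamma_one_sub, hsin]
    exact div_mul_cancel₀ _ hcos.ne'
  have duplication := Gamma_mul_Gamma_add_half (a / 2)
  rw [show a / 2 + 1 / 2 = (1 + a) / 2 by ring, mul_div_cancel₀ a two_ne_zero,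
    sub_eq_add_neg, rpow_add two_pos, rpow_one] at duplication
  have hΓ : 0 < Gamma ((1 + a) / 2) := Gamma_pos_of_pos (by linarith)
  have : 0 < Gamma (a / 2) := Gamma_pos_of_pos (by linarith)
  have : 0 < Gamma a := Gamma_pos_of_pos ha₀
  rw [rieszConst, rpow_neg pi_pos.le, ← sqrt_eq_rpow]
  generalize cos (π * a / 2) = c at *
  field_simp
  refine mul_right_cancel₀ hΓ.ne' ?_
  linear_combination (2 : ℝ) ^ (-a) * 2 * Gamma a * reflection - √π * duplication
    - (2 : ℝ) ^ (-a) * 2 * Gamma a * sq_sqrt pi_pos.le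

theorem Gamma_ratios_sum_eq {s t : ℝ} (hs : 0 < s) (ht : 0 < t) (hst : s + t < 1) :
    Gamma s * Gamma t / Gamma (s + t) + Gamma (1 - s - t) * Gamma t / Gamma (1 - s)
      + Gamma (1 - s - t) * Gamma s / Gamma (1 - t)
      = 4 / π * (Gamma s * Gamma t * Gamma (1 - s - t))
        * (sin (π * (s + t) / 2) * cos (π * s / 2) * cos (π * t / 2)) := by
  have hsin {a : ℝ} (ha₀ : 0 < a) (ha₁ : a < 1) : sin (π * a) ≠ 0 :=
    (sin_pos_of_pos_of_lt_pi (by positivity) (by nlinarith [pi_pos])).ne'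
  have trig := sin_add_add_sin_add_sin (π * s) (π * t)
  rw [← mul_add] at trig
  rw [div_eq_mul_inv, div_eq_mul_inv, div_eq_mul_inv,
    inv_Gamma_eq_Gamma_one_sub_mul_sin (hsin (by linarith) hst),
    inv_Gamma_one_sub_eq_Gamma_mul_sin (hsin hs (by linarith)),
    inv_Gamma_one_sub_eq_Gamma_mul_sin (hsin ht (by linarith)), sub_sub]
  linear_combination Gamma s * Gamma t * Gamma (1 - (s + t)) / π * trig

theorem rieszConst_mul_rieszConst_mul_Gamma_ratios_sum {s t : ℝ} (hs : 0 < s) (ht : 0 < t)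
    (hst : s + t < 1) :
    rieszConst s * rieszConst t * (Gamma s * Gamma t / Gamma (s + t)
      + Gamma (1 - s - t) * Gamma t / Gamma (1 - s) + Gamma (1 - s - t) * Gamma s / Gamma (1 - t))
      = rieszConst (s + t) := by
  have hsin : sin (π * (s + t)) = 2 * sin (π * (s + t) / 2) * cos (π * (s + t) / 2) := by
    rw [← sin_two_mul]; ring_nf
  have : 0 < Gamma s := Gamma_pos_of_pos hs
  have : 0 < Gamma t := Gamma_pos_of_pos ht
  have := cos_pi_mul_div_two_pos (a := s) (by linarith) (by linarith)
  have := cos_pi_mul_div_two_pos (a := t) (by linarith) (by linarith)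
  have := cos_pi_mul_div_two_pos (a := s + t) (by linarith) hst
  have : 0 < sin (π * (s + t) / 2) :=
    sin_pos_of_pos_of_lt_pi (by positivity) (by nlinarith [pi_pos])
  rw [Gamma_ratios_sum_eq hs ht hst, rieszConst_eq_inv hs (by linarith),
    rieszConst_eq_inv ht (by linarith), rieszConst_eq_inv (by linarith) hst,
    mul_inv (2 * Gamma (s + t)), mul_inv 2 (Gamma (s + t)),
    inv_Gamma_eq_Gamma_one_sub_mul_sin (by rw [hsin]; positivity), sub_sub, hsin]
  field_simp
  ring

theorem rieszConst_mul_rieszConst_mul_integral {s t : ℝ} (hs : 0 < s) (ht : 0 < t)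
    (hst : s + t < 1) {x : ℝ} (hx : x ≠ 0) :
    rieszConst s * rieszConst t * ∫ y, |y| ^ (s - 1) * |x - y| ^ (t - 1)
      = rieszConst (s + t) * |x| ^ (s + t - 1) := by
  rw [integral_abs_rpow_mul_abs_sub_rpow s t hx, integral_absBetaIntegrand hs ht hst,
    ← rieszConst_mul_rieszConst_mul_Gamma_ratios_sum hs ht hst]
  ring

theorem integral_rieszKernel_mul_rieszKernel_sub {s t : ℝ} (hs : 0 < s) (ht : 0 < t)
    (hst : s + t < 1) {x : ℝ} (hx : x ≠ 0) :
    ∫ y, rieszKernel s y * rieszKernel t (x - y) = rieszKernel (s + t) x := by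
  simp only [rieszKernel, mul_mul_mul_comm (rieszConst s)]
  rw [integral_const_mul, rieszConst_mul_rieszConst_mul_integral hs ht hst hx]

/-- Semigroup property of Riesz kernels: `R_{1,α/2} * R_{1,α/2} = R_{1,α}`, i.e.
`C_{1,α/2}² ∫ |y|^{α/2-1}|x-y|^{α/2-1} dy = C_{1,α}|x|^{α-1}` for `x ≠ 0`. -/
theorem stmt_6 (α : ℝ) (hα1 : 0 < α) (hα2 : α < 1) (x : ℝ) (hx : x ≠ 0) :
    (∫ y : ℝ, rieszKernel (α / 2) y * rieszKernel (α / 2) (x - y)) = rieszKernel α x ∧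
    rieszConst (α / 2) ^ 2 * ∫ y : ℝ, |y| ^ (α / 2 - 1) * |x - y| ^ (α / 2 - 1)
      = rieszConst α * |x| ^ (α - 1) := by
  have hs : 0 < α / 2 := by linarith
  have hss : α / 2 + α / 2 < 1 := by linarith
  have hconv := integral_rieszKernel_mul_rieszKernel_sub hs hs hss hx
  have hconst := rieszConst_mul_rieszConst_mul_integral hs hs hss hx
  rw [add_halves] at hconv hconst
  exact ⟨hconv, by rwa [sq]⟩
end

section
/- For every H ∈ (1/2, 1) and all θ > 0, w > 0, ∫_ℝ sin(θ|ξ|) sin(w|ξ|) |ξ|^{−1−2H} dξ = ((θ + w)^{2H} − |θ − w|^{2H})/(4 c_H), where c_H = Γ(2H+1) sin(πH)/(2π). -/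
/-!
Since `sin(θξ) sin(wξ) = ((1 - cos((θ + w)ξ)) - (1 - cos((θ - w)ξ))) / 2`, the integral reduces
to `∫₀^∞ (1 - cos(aξ)) ξ^(-1-s) dξ = |a|^s π / (2 Γ(s+1) sin(πs/2))` for `s = 2H ∈ (0, 2)`.
To compute it, write `Γ(s+1) ξ^(-1-s) = ∫₀^∞ t^s e^(-tξ) dt` and swap the integrals (Tonelli):
the Laplace transform `∫₀^∞ (1 - cos(aξ)) e^(-tξ) dξ = a² / (t (t² + a²))` leaves
`a² ∫₀^∞ t^(s-1) / (t² + a²) dt`. Writing in turn `1 / (t² + a²) = ∫₀^∞ e^(-(t² + a²)y) dy` and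
swapping again turns this into a product of Gamma integrals, `Γ(s/2) Γ(1 - s/2) / 2`, which the
reflection formula evaluates to `π / (2 sin(πs/2))`.
-/

open MeasureTheory Real Set Filter Function

lemma integrable_prod_of_nonneg {α β : Type*} [MeasurableSpace α] [MeasurableSpace β]
    {μ : Measure α} {ν : Measure β} [SFinite μ] [SFinite ν] {f : α → β → ℝ}
    (hf : AEStronglyMeasurable (uncurry f) (μ.prod ν)) (hf₀ : ∀ᵐ y ∂ν, ∀ᵐ x ∂μ, 0 ≤ f x y)
    (hfx : ∀ᵐ y ∂ν, Integrable (f · y) μ) (hint : Integrable (fun y => ∫ x, f x y ∂μ) ν) :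
    Integrable (uncurry f) (μ.prod ν) := by
  refine (integrable_prod_iff' hf).2 ⟨hfx, hint.congr ?_⟩
  filter_upwards [hf₀] with y hy
  exact integral_congr_ae (hy.mono fun x hx => (norm_of_nonneg hx).symm)

lemma integral_mul_exp_neg_mul_Ioi (c : ℝ) {b : ℝ} (hb : 0 < b) :
    ∫ y in Ioi 0, c * rexp (-(b * y)) = c / b := by
  have h := integral_exp_mul_Ioi (neg_neg_of_pos hb) 0
  simp only [neg_mul, mul_zero, exp_zero, neg_div_neg_eq] at h
  rw [integral_const_mul, h, mul_one_div]

lemma exp_neg_mul_mul_cos_eq_re (t a x : ℝ) :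
    rexp (-(t * x)) * cos (a * x) = (Complex.exp ((-t + a * Complex.I) * x)).re := by
  rw [Complex.exp_re]
  simp

lemma integrableOn_exp_neg_mul_mul_cos {t : ℝ} (ht : 0 < t) (a : ℝ) :
    IntegrableOn (fun x => rexp (-(t * x)) * cos (a * x)) (Ioi 0) := by
  simp_rw [exp_neg_mul_mul_cos_eq_re]
  exact (integrableOn_exp_mul_complex_Ioi (by simpa using ht) 0).re

lemma integral_exp_neg_mul_mul_cos {t : ℝ} (ht : 0 < t) (a : ℝ) :
    ∫ x in Ioi 0, rexp (-(t * x)) * cos (a * x) = t / (t ^ 2 + a ^ 2) := by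
  simp_rw [exp_neg_mul_mul_cos_eq_re, ← RCLike.re_to_complex]
  rw [integral_re (integrableOn_exp_mul_complex_Ioi (by simpa using ht) 0),
    integral_exp_mul_complex_Ioi (by simpa using ht)]
  simp [Complex.div_re, Complex.normSq_apply]
  field_simp

-- `cos (0 * x)` makes both terms instances of `integral_exp_neg_mul_mul_cos`.
lemma one_sub_cos_mul_mul_exp_eq (t a x : ℝ) :
    (1 - cos (a * x)) * rexp (-(t * x))
      = rexp (-(t * x)) * cos (0 * x) - rexp (-(t * x)) * cos (a * x) := by
  simp only [zero_mul, cos_zero]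
  ring

lemma integrableOn_one_sub_cos_mul_mul_exp {t : ℝ} (ht : 0 < t) (a : ℝ) :
    IntegrableOn (fun x => (1 - cos (a * x)) * rexp (-(t * x))) (Ioi 0) := by
  simp_rw [one_sub_cos_mul_mul_exp_eq t a]
  exact (integrableOn_exp_neg_mul_mul_cos ht 0).sub (integrableOn_exp_neg_mul_mul_cos ht a)

lemma integral_one_sub_cos_mul_mul_exp {t : ℝ} (ht : 0 < t) (a : ℝ) :
    ∫ x in Ioi 0, (1 - cos (a * x)) * rexp (-(t * x)) = a ^ 2 / (t * (t ^ 2 + a ^ 2)) := by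
  simp_rw [one_sub_cos_mul_mul_exp_eq t a]
  rw [integral_sub (integrableOn_exp_neg_mul_mul_cos ht 0) (integrableOn_exp_neg_mul_mul_cos ht a),
    integral_exp_neg_mul_mul_cos ht, integral_exp_neg_mul_mul_cos ht]
  field_simp
  ring

lemma integral_rpow_mul_exp_neg_mul_Ioi' {s x : ℝ} (hs : -1 < s) (hx : 0 < x) :
    ∫ t in Ioi 0, t ^ s * rexp (-(t * x)) = Gamma (s + 1) * x ^ (-1 - s) := by
  have h := integral_rpow_mul_exp_neg_mul_Ioi (a := s + 1) (by linarith) hx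
  simp only [add_sub_cancel_right, mul_comm x] at h
  rw [h, mul_comm, one_div, inv_rpow hx.le, ← rpow_neg hx.le]
  congr 2
  ring

section SqAddSq

variable {σ a : ℝ}

noncomputable def sqAddSqKernel (σ a t y : ℝ) : ℝ :=
  t ^ (σ - 1) * rexp (-((t ^ 2 + a ^ 2) * y))

lemma sqAddSqKernel_eq (t y : ℝ) :
    sqAddSqKernel σ a t y = rexp (-(a ^ 2 * y)) * (t ^ (σ - 1) * rexp (-y * t ^ (2 : ℝ))) := by
  rw [sqAddSqKernel, rpow_two, ← mul_left_comm, ← exp_add]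
  ring_nf

lemma integral_sqAddSqKernel_snd (ha : a ≠ 0) (t : ℝ) :
    ∫ y in Ioi 0, sqAddSqKernel σ a t y = t ^ (σ - 1) / (t ^ 2 + a ^ 2) :=
  integral_mul_exp_neg_mul_Ioi _ (by positivity)

lemma integrableOn_sqAddSqKernel_fst (hσ : 0 < σ) {y : ℝ} (hy : 0 < y) :
    IntegrableOn (sqAddSqKernel σ a · y) (Ioi 0) := by
  simp_rw [sqAddSqKernel_eq]
  exact (integrableOn_rpow_mul_exp_neg_mul_rpow (by linarith) two_pos hy).const_mul _

lemma integral_sqAddSqKernel_fst (hσ : 0 < σ) {y : ℝ} (hy : 0 < y) :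
    ∫ t in Ioi 0, sqAddSqKernel σ a t y
      = Gamma (σ / 2) / 2 * (y ^ (-σ / 2) * rexp (-(a ^ 2 * y))) := by
  simp_rw [sqAddSqKernel_eq]
  rw [integral_const_mul, integral_rpow_mul_exp_neg_mul_rpow two_pos (by linarith) hy]
  ring_nf

lemma integrable_sqAddSqKernel (hσ₀ : 0 < σ) (hσ₂ : σ < 2) (ha : a ≠ 0) :
    Integrable (uncurry (sqAddSqKernel σ a))
      ((volume.restrict (Ioi 0)).prod (volume.restrict (Ioi 0))) := by
  refine integrable_prod_of_nonneg (by unfold sqAddSqKernel; fun_prop) ?_ ?_ ?_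
  · filter_upwards [ae_restrict_mem measurableSet_Ioi] with y _
    filter_upwards [ae_restrict_mem measurableSet_Ioi] with t ht
    exact mul_nonneg (rpow_nonneg ht.le _) (exp_nonneg _)
  · filter_upwards [ae_restrict_mem measurableSet_Ioi] with y hy
    exact integrableOn_sqAddSqKernel_fst hσ₀ hy
  · refine IntegrableOn.congr_fun ?_ (fun y hy =>
      (integral_sqAddSqKernel_fst hσ₀ hy).symm) measurableSet_Ioi
    have h := integrableOn_rpow_mul_exp_neg_mul_rpow (s := -σ / 2) (p := 1) (b := a ^ 2)
      (by linarith) one_pos (by positivity)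
    simp only [rpow_one, neg_mul] at h
    exact h.const_mul _

lemma integrableOn_rpow_div_sq_add_sq (hσ₀ : 0 < σ) (hσ₂ : σ < 2) (ha : a ≠ 0) :
    IntegrableOn (fun t => t ^ (σ - 1) / (t ^ 2 + a ^ 2)) (Ioi 0) := by
  have h := (integrable_sqAddSqKernel hσ₀ hσ₂ ha).integral_prod_left
  simp only [uncurry_apply_pair, integral_sqAddSqKernel_snd ha] at h
  exact h

lemma integral_rpow_div_sq_add_sq (hσ₀ : 0 < σ) (hσ₂ : σ < 2) (ha : a ≠ 0) :
    ∫ t in Ioi 0, t ^ (σ - 1) / (t ^ 2 + a ^ 2) = |a| ^ (σ - 2) * (π / (2 * sin (π * σ / 2))) := by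
  calc ∫ t in Ioi 0, t ^ (σ - 1) / (t ^ 2 + a ^ 2)
      = ∫ t in Ioi 0, ∫ y in Ioi 0, sqAddSqKernel σ a t y := by
        simp only [integral_sqAddSqKernel_snd ha]
    _ = ∫ y in Ioi 0, ∫ t in Ioi 0, sqAddSqKernel σ a t y :=
        integral_integral_swap (integrable_sqAddSqKernel hσ₀ hσ₂ ha)
    _ = ∫ y in Ioi 0, Gamma (σ / 2) / 2 * (y ^ ((1 - σ / 2) - 1) * rexp (-(|a| ^ 2 * y))) := by
        refine setIntegral_congr_fun measurableSet_Ioi fun y hy => ?_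
        rw [integral_sqAddSqKernel_fst hσ₀ hy, sq_abs]
        ring_nf
    _ = Gamma (σ / 2) / 2 * ((1 / |a| ^ 2) ^ (1 - σ / 2) * Gamma (1 - σ / 2)) := by
        rw [integral_const_mul,
          integral_rpow_mul_exp_neg_mul_Ioi (by linarith) (pow_pos (abs_pos.2 ha) 2)]
    _ = |a| ^ (σ - 2) * (π / (2 * sin (π * σ / 2))) := by
        have hpow : (1 / |a| ^ 2) ^ (1 - σ / 2) = |a| ^ (σ - 2) := by
          rw [one_div, ← rpow_natCast, ← rpow_neg (abs_nonneg a), ← rpow_mul (abs_nonneg a)]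
          norm_num
          ring_nf
        rw [hpow, mul_left_comm, div_mul_eq_mul_div, Gamma_mul_Gamma_one_sub]
        ring_nf

end SqAddSq

section OneSubCos

variable {s a : ℝ}

noncomputable def oneSubCosKernel (s a x t : ℝ) : ℝ :=
  t ^ s * ((1 - cos (a * x)) * rexp (-(t * x)))

lemma integral_oneSubCosKernel_fst {t : ℝ} (ht : 0 < t) :
    ∫ x in Ioi 0, oneSubCosKernel s a x t = a ^ 2 * (t ^ (s - 1) / (t ^ 2 + a ^ 2)) := by
  simp only [oneSubCosKernel]
  rw [integral_const_mul, integral_one_sub_cos_mul_mul_exp ht, rpow_sub_one ht.ne']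
  field_simp

lemma integral_oneSubCosKernel_snd (hs : -1 < s) {x : ℝ} (hx : 0 < x) :
    ∫ t in Ioi 0, oneSubCosKernel s a x t = Gamma (s + 1) * ((1 - cos (a * x)) * x ^ (-1 - s)) := by
  simp only [oneSubCosKernel, mul_left_comm _ (1 - cos (a * x))]
  rw [integral_const_mul, integral_rpow_mul_exp_neg_mul_Ioi' hs hx]

lemma integrable_oneSubCosKernel (hs₀ : 0 < s) (hs₂ : s < 2) (ha : a ≠ 0) :
    Integrable (uncurry (oneSubCosKernel s a))
      ((volume.restrict (Ioi 0)).prod (volume.restrict (Ioi 0))) := by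
  refine integrable_prod_of_nonneg (by unfold oneSubCosKernel; fun_prop) ?_ ?_ ?_
  · filter_upwards [ae_restrict_mem measurableSet_Ioi] with t ht
    refine Eventually.of_forall fun x => ?_
    have := cos_le_one (a * x)
    exact mul_nonneg (rpow_nonneg ht.le _) (mul_nonneg (by linarith) (exp_nonneg _))
  · filter_upwards [ae_restrict_mem measurableSet_Ioi] with t ht
    exact (integrableOn_one_sub_cos_mul_mul_exp ht a).const_mul _
  · refine IntegrableOn.congr_fun ?_ (fun t ht =>
      (integral_oneSubCosKernel_fst ht).symm) measurableSet_Ioi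
    exact (integrableOn_rpow_div_sq_add_sq hs₀ hs₂ ha).const_mul _

lemma integrableOn_one_sub_cos_mul_rpow (hs₀ : 0 < s) (hs₂ : s < 2) (a : ℝ) :
    IntegrableOn (fun x => (1 - cos (a * x)) * x ^ (-1 - s)) (Ioi 0) := by
  obtain rfl | ha := eq_or_ne a 0
  · simp
  have hΓ : Gamma (s + 1) ≠ 0 := (Gamma_pos_of_pos (by linarith)).ne'
  refine (integrable_const_mul_iff (isUnit_iff_ne_zero.2 hΓ) _).1 ?_
  refine ((integrable_oneSubCosKernel hs₀ hs₂ ha).integral_prod_left).congr ?_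
  filter_upwards [ae_restrict_mem measurableSet_Ioi] with x hx
  exact integral_oneSubCosKernel_snd (by linarith) hx

lemma integral_one_sub_cos_mul_rpow (hs₀ : 0 < s) (hs₂ : s < 2) (a : ℝ) :
    ∫ x in Ioi 0, (1 - cos (a * x)) * x ^ (-1 - s)
      = |a| ^ s * π / (2 * Gamma (s + 1) * sin (π * s / 2)) := by
  obtain rfl | ha := eq_or_ne a 0
  · simp [zero_rpow hs₀.ne']
  have hΓ : Gamma (s + 1) ≠ 0 := (Gamma_pos_of_pos (by linarith)).ne'
  have hswap : Gamma (s + 1) * ∫ x in Ioi 0, (1 - cos (a * x)) * x ^ (-1 - s)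
      = a ^ 2 * ∫ t in Ioi 0, t ^ (s - 1) / (t ^ 2 + a ^ 2) := by
    calc Gamma (s + 1) * ∫ x in Ioi 0, (1 - cos (a * x)) * x ^ (-1 - s)
        = ∫ x in Ioi 0, ∫ t in Ioi 0, oneSubCosKernel s a x t := by
          rw [← integral_const_mul]
          exact setIntegral_congr_fun measurableSet_Ioi fun x hx =>
            (integral_oneSubCosKernel_snd (by linarith) hx).symm
      _ = ∫ t in Ioi 0, ∫ x in Ioi 0, oneSubCosKernel s a x t :=
          integral_integral_swap (integrable_oneSubCosKernel hs₀ hs₂ ha)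
      _ = a ^ 2 * ∫ t in Ioi 0, t ^ (s - 1) / (t ^ 2 + a ^ 2) := by
          rw [← integral_const_mul]
          exact setIntegral_congr_fun measurableSet_Ioi fun t ht =>
            integral_oneSubCosKernel_fst ht
  have hpow : a ^ 2 * |a| ^ (s - 2) = |a| ^ s := by
    rw [← sq_abs, ← rpow_natCast, ← rpow_add (abs_pos.2 ha)]
    norm_num
  rw [← mul_right_inj' hΓ, hswap, integral_rpow_div_sq_add_sq hs₀ hs₂ ha, ← mul_assoc, hpow]
  field_simp

end OneSubCos

/-- The classical integral formula: for `H ∈ (1/2, 1)` and `θ, w > 0`,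
`∫ sin(θ|ξ|) sin(w|ξ|) |ξ|^{-1-2H} dξ = ((θ+w)^{2H} - |θ-w|^{2H})/(4 c_H)`,
where `c_H = Γ(2H+1) sin(πH)/(2π)`. -/
theorem stmt_8 (H : ℝ) (h1 : 1 / 2 < H) (h2 : H < 1) (θ w : ℝ) (hθ : 0 < θ) (hw : 0 < w) :
    (∫ ξ : ℝ, Real.sin (θ * |ξ|) * Real.sin (w * |ξ|) * |ξ| ^ (-1 - 2 * H))
      = ((θ + w) ^ (2 * H) - |θ - w| ^ (2 * H))
        / (4 * (Gamma (2 * H + 1) * Real.sin (π * H) / (2 * π))) := by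
  have hs₀ : 0 < 2 * H := by linarith
  have hs₂ : 2 * H < 2 := by linarith
  have hsin_mul_sin (x : ℝ) : sin (θ * x) * sin (w * x) * x ^ (-1 - 2 * H)
      = ((1 - cos ((θ + w) * x)) * x ^ (-1 - 2 * H)
        - (1 - cos ((θ - w) * x)) * x ^ (-1 - 2 * H)) / 2 := by
    rw [add_mul θ, sub_mul θ, cos_add, cos_sub]
    ring
  rw [integral_comp_abs (f := fun x => sin (θ * x) * sin (w * x) * x ^ (-1 - 2 * H)),
    funext hsin_mul_sin, integral_div,
    integral_sub (integrableOn_one_sub_cos_mul_rpow hs₀ hs₂ _)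
      (integrableOn_one_sub_cos_mul_rpow hs₀ hs₂ _),
    integral_one_sub_cos_mul_rpow hs₀ hs₂, integral_one_sub_cos_mul_rpow hs₀ hs₂,
    abs_of_pos (add_pos hθ hw), show π * (2 * H) / 2 = π * H by ring]
  have hΓ : Gamma (2 * H + 1) ≠ 0 := (Gamma_pos_of_pos (by linarith)).ne'
  have hsin : sin (π * H) ≠ 0 :=
    (sin_pos_of_pos_of_lt_pi (by positivity) (by nlinarith [pi_pos])).ne'
  field_simp
  ring
end
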